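/- arXiv:1308.4244 — 4 statements merged into one kernel-verified Lean document; each statement's English description precedes it below -/
import Mathlib

section
/- Let R be an associative ring in which 2 is invertible, and let d_0, d_1, ..., d_n be elements of R satisfying, for every m with 0 ≤ m ≤ n, the relation ∑_{i=0}^{m} (d_i d_{m-i} + d_{m-i} d_i) = 0. Then ∑_{i=1}^{n} (d_0 · (d_i d_{n+1-i} + d_{n+1-i} d_i) − (d_i d_{n+1-i} + d_{n+1-i} d_i) · d_0) = 0. -/
/-!
Put `D = ∑ dᵢ Xⁱ` in `R⟦X⟧`. The hypothesis says that `2 D²` vanishes below degree `n + 1`, so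
`D²` does, and in particular `d₀² = 0`. Comparing the degree-`(n+1)` coefficients of
`D · D² = D² · D` then shows that `d₀` commutes with `S = coeff (n+1) D²`. The sum in question
is `[d₀, 2S - A₀ - Aₙ₊₁]` with `Aᵢ = dᵢ dₙ₊₁₋ᵢ + dₙ₊₁₋ᵢ dᵢ`, and the boundary terms
`A₀ = Aₙ₊₁ = d₀ dₙ₊₁ + dₙ₊₁ d₀` commute with `d₀` because `d₀² = 0`.
-/

open Finset PowerSeries

section

variable {R : Type*}

theorem commute_mul_add_mul_of_mul_self_eq_zero [NonUnitalSemiring R] {a : R} (ha : a * a = 0)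
    (b : R) : Commute a (a * b + b * a) := by
  simp only [Commute, SemiconjBy, mul_add, add_mul, ← mul_assoc, ha, zero_mul, zero_add]
  simp only [mul_assoc, ha, mul_zero, add_zero]

namespace PowerSeries

variable [Semiring R]

theorem coeff_mk_mul_mk (a b : ℕ → R) (m : ℕ) :
    coeff m (mk a * mk b) = ∑ i ∈ range (m + 1), a i * b (m - i) := by
  rw [coeff_mul,
    Nat.sum_antidiagonal_eq_sum_range_succ (fun i j => coeff i (mk a) * coeff j (mk b))]
  simp only [coeff_mk]

theorem sum_range_anticomm_eq_two_mul_coeff_mk_mul_mk (d : ℕ → R) (m : ℕ) :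
    ∑ i ∈ range (m + 1), (d i * d (m - i) + d (m - i) * d i) =
      2 * coeff m (mk d * mk d) := by
  rw [sum_add_distrib, two_mul, coeff_mk_mul_mk, ← sum_range_reflect]
  congr 1
  refine sum_congr rfl fun i hi => ?_
  rw [mem_range] at hi
  rw [show m + 1 - 1 - i = m - i by omega, Nat.sub_sub_self (by omega)]

theorem coeff_mul_eq_coeff_zero_mul_of_coeff_eq_zero {φ ψ : R⟦X⟧} {n : ℕ}
    (hψ : ∀ m < n, coeff m ψ = 0) : coeff n (φ * ψ) = coeff 0 φ * coeff n ψ := by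
  rw [coeff_mul, sum_eq_single_of_mem (0, n) (by simp)]
  rintro ⟨p, q⟩ hpq hne
  rw [HasAntidiagonal.mem_antidiagonal] at hpq
  rw [hψ q (by grind), mul_zero]

theorem coeff_mul_eq_mul_coeff_zero_of_coeff_eq_zero {φ ψ : R⟦X⟧} {n : ℕ}
    (hφ : ∀ m < n, coeff m φ = 0) : coeff n (φ * ψ) = coeff n φ * coeff 0 ψ := by
  rw [coeff_mul, sum_eq_single_of_mem (n, 0) (by simp)]
  rintro ⟨p, q⟩ hpq hne
  rw [HasAntidiagonal.mem_antidiagonal] at hpq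
  rw [hφ p (by grind), zero_mul]

theorem commute_coeff_zero_coeff_mul_self {φ : R⟦X⟧} {n : ℕ}
    (h : ∀ m < n, coeff m (φ * φ) = 0) : Commute (coeff 0 φ) (coeff n (φ * φ)) := by
  -- both sides are the degree-`n` coefficient of `φ * φ * φ`
  rw [Commute, SemiconjBy, ← coeff_mul_eq_coeff_zero_mul_of_coeff_eq_zero h,
    ← coeff_mul_eq_mul_coeff_zero_of_coeff_eq_zero h, mul_assoc]

end PowerSeries

end

/-- **Graded Lie identity** (Lemma on graded Lie commutators, first identity).
In a ring `R` with `2` invertible, if `d₀, …, dₙ` satisfy the supercommutator relations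
`∑_{i=0}^m [dᵢ, d_{m-i}] = 0` for all `m ≤ n` (where `[a,b] = ab + ba` for odd elements),
then `∑_{i=1}^n [d₀, [dᵢ, d_{n+1-i}]] = 0`, where the outer bracket is the ordinary
commutator of `d₀` with an even element. -/
theorem stmt_0 {R : Type*} [Ring R] [Invertible (2 : R)] (n : ℕ) (d : ℕ → R)
    (h : ∀ m ≤ n, ∑ i ∈ Finset.range (m + 1), (d i * d (m - i) + d (m - i) * d i) = 0) :
    ∑ i ∈ Finset.Icc 1 n,
      (d 0 * (d i * d (n + 1 - i) + d (n + 1 - i) * d i)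
        - (d i * d (n + 1 - i) + d (n + 1 - i) * d i) * d 0) = 0 := by
  set A : ℕ → R := fun i => d i * d (n + 1 - i) + d (n + 1 - i) * d i
  have hsq : ∀ m ≤ n, coeff m (mk d * mk d) = 0 := fun m hm => by
    rw [← (isUnit_of_invertible (2 : R)).mul_right_eq_zero,
      ← sum_range_anticomm_eq_two_mul_coeff_mk_mul_mk, h m hm]
  have hd0 : d 0 * d 0 = 0 := by simpa [coeff_mk_mul_mk] using hsq 0 n.zero_le
  have hcomm : Commute (d 0) (∑ i ∈ range (n + 1 + 1), A i) := by
    rw [sum_range_anticomm_eq_two_mul_coeff_mk_mul_mk, ← coeff_mk 0 d]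
    exact (Commute.ofNat_right _ 2).mul_right
      (commute_coeff_zero_coeff_mul_self (n := n + 1) fun m hm => hsq m (by omega))
  have hsplit : ∑ i ∈ range (n + 1 + 1), A i = ∑ i ∈ Icc 1 n, A i + (A 0 + A (n + 1)) := by
    rw [sum_range_succ, sum_range_succ', ← Finset.Ico_add_one_right_eq_Icc, sum_Ico_eq_sum_range]
    simp only [add_tsub_cancel_right, add_comm 1]
    abel
  have hA0 : Commute (d 0) (A 0) := commute_mul_add_mul_of_mul_self_eq_zero hd0 _
  have hAn : Commute (d 0) (A (n + 1)) := by
    simpa [A, add_comm] using commute_mul_add_mul_of_mul_self_eq_zero hd0 (d (n + 1))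
  rw [sum_sub_distrib, ← mul_sum, ← sum_mul, sub_eq_zero]
  have hinner := hcomm.sub_right (hA0.add_right hAn)
  rw [hsplit, add_sub_cancel_right] at hinner
  exact hinner.eq
end

section
/- Let M = ⊕_n M^n be a graded module over a ring, with endomorphisms d, d₀ of degree +1 satisfying d² = 0 and d₀² = 0, and h an endomorphism of degree −1. Set d₁ := d − d₀ and p₀ := id − h d₀ − d₀ h, and assume p₀ ∘ d₁ = 0. Then (id + h d₁) ∘ d = d₀ ∘ (id + h d₁). -/
theorem perturbation_intertwining_defect {A : Type*} [Ring A] (d d₀ h : A) :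
    (1 + h * (d - d₀)) * d - d₀ * (1 + h * (d - d₀)) =
      (1 - h * d₀ - d₀ * h) * (d - d₀) + h * (d * d) - h * (d₀ * d₀) := by
  noncomm_ring

theorem perturbation_intertwines {A : Type*} [Ring A] {d d₀ h : A}
    (hdd : d * d = 0) (hd₀d₀ : d₀ * d₀ = 0)
    (hp : (1 - h * d₀ - d₀ * h) * (d - d₀) = 0) :
    (1 + h * (d - d₀)) * d = d₀ * (1 + h * (d - d₀)) := by
  rw [← sub_eq_zero, perturbation_intertwining_defect, hp, hdd, hd₀d₀]
  simp

theorem stmt_4_general {R M : Type*} [Ring R] [AddCommGroup M] [Module R M]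
    (d d₀ h : Module.End R M)
    (hdd : d * d = 0) (hd₀d₀ : d₀ * d₀ = 0)
    (hp : (1 - h * d₀ - d₀ * h) * (d - d₀) = 0) :
    (1 + h * (d - d₀)) * d = d₀ * (1 + h * (d - d₀)) :=
  perturbation_intertwines hdd hd₀d₀ hp

/-- **Homological perturbation identity.** Let `M = ⊕ₙ Mⁿ` be a graded module with
endomorphisms `d`, `d₀` of degree `+1` satisfying `d² = 0` and `d₀² = 0`, and `h` an
endomorphism of degree `−1`. With `d₁ := d − d₀` and `p₀ := 1 − h d₀ − d₀ h`, if
`p₀ ∘ d₁ = 0` then `(1 + h d₁) ∘ d = d₀ ∘ (1 + h d₁)`. -/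
theorem stmt_4 {R M : Type*} [Ring R] [AddCommGroup M] [Module R M]
    (ℳ : ℤ → Submodule R M) (hM : DirectSum.IsInternal ℳ)
    (d d₀ h : Module.End R M)
    (hd : ∀ (i : ℤ), ∀ x ∈ ℳ i, d x ∈ ℳ (i + 1))
    (hd₀ : ∀ (i : ℤ), ∀ x ∈ ℳ i, d₀ x ∈ ℳ (i + 1))
    (hh : ∀ (i : ℤ), ∀ x ∈ ℳ i, h x ∈ ℳ (i - 1))
    (hdd : d * d = 0) (hd₀d₀ : d₀ * d₀ = 0)
    (hp : (1 - h * d₀ - d₀ * h) * (d - d₀) = 0) :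
    (1 + h * (d - d₀)) * d = d₀ * (1 + h * (d - d₀)) :=
  stmt_4_general d d₀ h hdd hd₀d₀ hp
end

section
/- Let R be an associative ring, L_n(R) the n-th lower central series term of R under the commutator bracket, F^d R the commutator filtration, and for n ≥ 1 let I_n(R) be the two-sided ideal generated by all products L_{i_1}(R)···L_{i_m}(R) (interspersed with ring elements) with each i_j ≥ 2 and i_1 + ... + i_m ≥ n. Then: (a) I_n(R) ⊆ F^{⌊n/2⌋} R; (b) F^{n−1} R ⊆ I_n(R) for all n ≥ 2. -/
/-! Since the `L_i(R)` decrease in `i` and a factor `L₁(R) = R` is absorbed by the neighbouring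
ring elements, a chain `R·L_{i₁}·R⋯L_{iₘ}·R` lies in `F^d R` for every `d ≤ ∑ (iⱼ - 1)`, and it
does not change when the factors with `iⱼ = 1` are dropped. For (a), all `iⱼ ≥ 2` give
`∑ (iⱼ - 1) ≥ ∑ iⱼ / 2 ≥ n / 2`. For (b), dropping the factors with `iⱼ = 1` from a chain with
`∑ (iⱼ - 1) = n - 1 ≥ 1` leaves a nonempty chain with all `iⱼ ≥ 2` and
`∑ iⱼ = ∑ (iⱼ - 1) + m ≥ n`. -/

variable (R : Type*) [Ring R]

/-- `lcsR R n` is the `(n+1)`-st term `L_{n+1}(R)` of the lower central series of `R` viewed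
as a Lie ring under the commutator: `lcsR R 0 = L₁(R) = R`,
`lcsR R (n+1) = L_{n+2}(R) = [R, L_{n+1}(R)]` (as an additive subgroup, i.e. `ℤ`-submodule). -/
def lcsR : ℕ → Submodule ℤ R
  | 0 => ⊤
  | n + 1 => Submodule.span ℤ {x : R | ∃ a : R, ∃ b ∈ lcsR n, x = a * b - b * a}

/-- For a list `[n₁, …, nₘ]` of positive integers, `chainR R [n₁, …, nₘ]` is the additive
subgroup `R·L_{n₁}(R)·R·L_{n₂}(R)·⋯·L_{nₘ}(R)·R` of products of elements of the lower
central series terms interspersed with arbitrary ring elements. -/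
def chainR : List ℕ → Submodule ℤ R
  | [] => ⊤
  | n :: t => ⊤ * lcsR R (n - 1) * chainR t

/-- Kapranov's commutator filtration: `commF R d` is the two-sided ideal spanned by all
products (interspersed with arbitrary ring elements) of elements of `L_{n₁}(R), …, L_{nₘ}(R)`
with `n₁ + ⋯ + nₘ − m = d`. -/
def commF (d : ℕ) : Submodule ℤ R :=
  ⨆ (ns : List ℕ) (_ : ∀ n ∈ ns, 1 ≤ n) (_ : (ns.map (· - 1)).sum = d), chainR R ns

/-- The I-filtration: `idealI R n` is the two-sided ideal generated by all products
(interspersed with ring elements) `L_{i₁}(R)⋯L_{iₘ}(R)` with each `iⱼ ≥ 2` and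
`i₁ + ⋯ + iₘ ≥ n`. -/
def idealI (n : ℕ) : Submodule ℤ R :=
  ⨆ (ns : List ℕ) (_ : ∀ i ∈ ns, 2 ≤ i) (_ : n ≤ ns.sum), chainR R ns

lemma lcsR_antitone : Antitone (lcsR R) := by
  refine antitone_nat_of_succ_le fun n => ?_
  induction n with
  | zero => exact le_top
  | succ k ih =>
    refine Submodule.span_mono ?_
    rintro x ⟨a, b, hb, rfl⟩
    exact ⟨a, b, ih hb, rfl⟩

lemma top_mul_chainR (ns : List ℕ) : ⊤ * chainR R ns = chainR R ns := by
  have top_mul_top : (⊤ : Submodule ℤ R) * ⊤ = ⊤ :=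
    top_le_iff.mp (by simpa using mul_le_mul_left (le_top : (1 : Submodule ℤ R) ≤ ⊤) ⊤)
  cases ns with
  | nil => exact top_mul_top
  | cons n t => simp only [chainR, ← mul_assoc, top_mul_top]

lemma chainR_cons_of_lt_two {n : ℕ} (hn : n < 2) (t : List ℕ) :
    chainR R (n :: t) = chainR R t := by
  rw [chainR, show n - 1 = 0 by omega, lcsR, mul_assoc, top_mul_chainR, top_mul_chainR]

lemma chainR_filter_two_le (ns : List ℕ) :
    chainR R (ns.filter (2 ≤ ·)) = chainR R ns := by
  induction ns with
  | nil => rfl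
  | cons n t ih =>
    by_cases hn : 2 ≤ n
    · rw [List.filter_cons_of_pos (by simpa using hn), chainR, chainR, ih]
    · rw [List.filter_cons_of_neg (by simpa using hn), ih, chainR_cons_of_lt_two R (by omega)]

lemma chainR_anti {ms ns : List ℕ} (h : List.Forall₂ (· ≤ ·) ms ns) :
    chainR R ns ≤ chainR R ms := by
  induction h with
  | nil => exact le_rfl
  | cons hmn _ ih =>
    exact mul_le_mul' (mul_le_mul_right (lcsR_antitone R (Nat.sub_le_sub_right hmn 1)) ⊤) ih

lemma chainR_le_commF {ns : List ℕ} (h : ∀ n ∈ ns, 1 ≤ n) {d : ℕ}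
    (hd : (ns.map (· - 1)).sum = d) : chainR R ns ≤ commF R d :=
  le_iSup_of_le ns (le_iSup_of_le h (le_iSup_of_le hd le_rfl))

lemma chainR_le_idealI {ns : List ℕ} (h : ∀ i ∈ ns, 2 ≤ i) {n : ℕ} (hn : n ≤ ns.sum) :
    chainR R ns ≤ idealI R n :=
  le_iSup_of_le ns (le_iSup_of_le h (le_iSup_of_le hn le_rfl))

lemma List.sum_eq_sum_map_sub_one_add_length {ns : List ℕ} (h : ∀ n ∈ ns, 1 ≤ n) :
    ns.sum = (ns.map (· - 1)).sum + ns.length := by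
  induction ns with
  | nil => rfl
  | cons n t ih =>
    simp only [List.forall_mem_cons] at h
    simp only [List.sum_cons, List.map_cons, List.length_cons, ih h.2]
    omega

lemma List.sum_map_sub_one_filter_two_le (ns : List ℕ) :
    ((ns.filter (2 ≤ ·)).map (· - 1)).sum = (ns.map (· - 1)).sum := by
  induction ns with
  | nil => rfl
  | cons n t ih =>
    by_cases hn : 2 ≤ n
    · rw [List.filter_cons_of_pos (by simpa using hn), List.map_cons, List.sum_cons, ih,
        List.map_cons, List.sum_cons]
    · rw [List.filter_cons_of_neg (by simpa using hn), ih, List.map_cons, List.sum_cons]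
      omega

lemma List.exists_forall₂_le_sum_map_sub_one_eq {ns : List ℕ} (h : ∀ n ∈ ns, 1 ≤ n) {d : ℕ}
    (hd : d ≤ (ns.map (· - 1)).sum) :
    ∃ ms : List ℕ, List.Forall₂ (· ≤ ·) ms ns ∧ (∀ m ∈ ms, 1 ≤ m) ∧
      (ms.map (· - 1)).sum = d := by
  induction ns generalizing d with
  | nil => exact ⟨[], .nil, by simp, by simp at hd; simp [hd]⟩
  | cons n t ih =>
    simp only [List.forall_mem_cons] at h
    simp only [List.map_cons, List.sum_cons] at hd
    by_cases hdt : d ≤ (t.map (· - 1)).sum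
    · obtain ⟨ms, hle, hpos, hsum⟩ := ih h.2 hdt
      exact ⟨1 :: ms, .cons h.1 hle, by simpa using hpos, by simpa using hsum⟩
    · refine ⟨(d - (t.map (· - 1)).sum + 1) :: t, .cons (by omega) (List.forall₂_refl t), ?_, ?_⟩
      · simpa using h.2
      · simp only [List.map_cons, List.sum_cons]; omega

lemma chainR_le_commF_of_le {ns : List ℕ} (h : ∀ n ∈ ns, 1 ≤ n) {d : ℕ}
    (hd : d ≤ (ns.map (· - 1)).sum) : chainR R ns ≤ commF R d := by
  obtain ⟨ms, hle, hpos, hsum⟩ := List.exists_forall₂_le_sum_map_sub_one_eq h hd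
  exact (chainR_anti R hle).trans (chainR_le_commF R hpos hsum)

theorem idealI_le_commF (n : ℕ) : idealI R n ≤ commF R (n / 2) := by
  refine iSup₂_le fun ns h2 => iSup_le fun hsum => chainR_le_commF_of_le R (fun i hi => ?_) ?_
  · exact one_le_two.trans (h2 i hi)
  · have hlen : ns.length ≤ (ns.map (· - 1)).sum :=
      List.length_map _ ▸ List.length_le_sum_of_one_le _
        (List.forall_mem_map.mpr fun i hi => Nat.le_sub_one_of_lt (h2 i hi))
    have hsplit := List.sum_eq_sum_map_sub_one_add_length fun i hi => one_le_two.trans (h2 i hi)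
    omega

theorem commF_le_idealI {n : ℕ} (hn : 2 ≤ n) : commF R (n - 1) ≤ idealI R n := by
  refine iSup₂_le fun ns _ => iSup_le fun hd => ?_
  set ms := ns.filter (2 ≤ ·)
  have hms : ∀ i ∈ ms, 2 ≤ i := fun i hi => by simpa using (List.mem_filter.mp hi).2
  have hsum : (ms.map (· - 1)).sum = n - 1 := (List.sum_map_sub_one_filter_two_le ns).trans hd
  have hne : ms ≠ [] := by rintro h; simp [h] at hsum; omega
  have hsplit := List.sum_eq_sum_map_sub_one_add_length fun i hi => one_le_two.trans (hms i hi)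
  have hlen := List.length_pos_iff.mpr hne
  rw [← chainR_filter_two_le]
  exact chainR_le_idealI R hms (by omega)

theorem stmt_7 (n : ℕ) :
    idealI R n ≤ commF R (n / 2) ∧ (2 ≤ n → commF R (n - 1) ≤ idealI R n) :=
  ⟨idealI_le_commF R n, commF_le_idealI R⟩
end

section
/- Let k be a field of characteristic zero and consider the ring k[x][[y]] of formal power series in y with coefficients in the polynomial ring k[x]. Suppose f ∈ k[x][[y]] satisfies ∂f/∂x + ∂f/∂y = 0. Then there exists a polynomial g ∈ k[t] such that f(x, y) = g(y − x), i.e. f = ∑_n c_n (y − x)^n for finitely many c_n ∈ k; moreover g is uniquely determined by g(−x) = f(x, 0). -/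
/-! `D = ∂/∂x + ∂/∂y` is a derivation of `k[x][[y]]` killing `u = y − x`, so it kills every
polynomial `g(u)`. Conversely, comparing `y`-coefficients in `D f = 0` gives
`(n + 1) fₙ₊₁ = −fₙ'`, so in characteristic zero an element of `ker D` is determined by its
constant coefficient `f₀ ∈ k[x]`; and `g(u)` has constant coefficient `g(−x)`, which determines
`g` since `x ↦ −x` is an involution. -/

/-- The partial derivative `∂f/∂x` of `f ∈ k[x][[y]]`, computed coefficientwise. -/
noncomputable def Dx {k : Type*} [Field k] (f : PowerSeries (Polynomial k)) :
    PowerSeries (Polynomial k) :=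
  PowerSeries.mk fun n => Polynomial.derivative (PowerSeries.coeff (R := Polynomial k) n f)

/-- The partial derivative `∂f/∂y` of `f ∈ k[x][[y]]` in the power series variable. -/
noncomputable def Dy {k : Type*} [Field k] (f : PowerSeries (Polynomial k)) :
    PowerSeries (Polynomial k) :=
  PowerSeries.mk fun n => ((n : Polynomial k) + 1) * PowerSeries.coeff (R := Polynomial k) (n + 1) f

open Polynomial

section

variable {k : Type*} [Field k]

lemma Dx_mul (f g : PowerSeries k[X]) : Dx (f * g) = Dx f * g + f * Dx g := by
  refine PowerSeries.ext fun n => ?_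
  simp only [Dx, PowerSeries.coeff_mk, map_add, PowerSeries.coeff_mul, derivative_sum,
    derivative_mul, Finset.sum_add_distrib]

lemma Dy_eq_derivative (f : PowerSeries k[X]) : Dy f = PowerSeries.derivative k[X] f := by
  refine PowerSeries.ext fun n => ?_
  simp [Dy, PowerSeries.coeff_derivative, mul_comm]

noncomputable def derivationDx : Derivation k (PowerSeries k[X]) (PowerSeries k[X]) :=
  Derivation.mk'
    { toFun := Dx
      map_add' := fun f g => PowerSeries.ext fun n => by simp [Dx]
      map_smul' := fun c f => PowerSeries.ext fun n => by simp [Dx] }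
    fun f g => by simp only [LinearMap.coe_mk, AddHom.coe_mk, Dx_mul, smul_eq_mul]; ring

noncomputable def derivationDy : Derivation k (PowerSeries k[X]) (PowerSeries k[X]) :=
  Derivation.mk'
    { toFun := Dy
      map_add' := fun f g => by simp [Dy_eq_derivative]
      map_smul' := fun c f => PowerSeries.ext fun n => by simp [Dy] }
    fun f g => by simp [Dy_eq_derivative]

noncomputable def totalDerivation : Derivation k (PowerSeries k[X]) (PowerSeries k[X]) :=
  derivationDx + derivationDy

lemma totalDerivation_apply (f : PowerSeries k[X]) : totalDerivation f = Dx f + Dy f := rfl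

lemma totalDerivation_X_sub_C_X :
    totalDerivation (PowerSeries.X - PowerSeries.C (R := k[X]) X) = 0 :=
  PowerSeries.ext fun n => by
    rcases n with _ | n <;> simp [totalDerivation_apply, Dx, Dy, PowerSeries.coeff_X,
      PowerSeries.coeff_C, apply_ite derivative]

lemma totalDerivation_aeval_X_sub_C_X (g : k[X]) :
    totalDerivation (aeval (PowerSeries.X - PowerSeries.C (R := k[X]) X) g) = 0 := by
  rw [Derivation.map_aeval, totalDerivation_X_sub_C_X, smul_zero]

lemma eq_zero_of_totalDerivation_eq_zero [CharZero k] {f : PowerSeries k[X]}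
    (hf : totalDerivation f = 0) (h0 : PowerSeries.constantCoeff f = 0) : f = 0 := by
  refine PowerSeries.ext fun n => ?_
  induction n with
  | zero => simpa using h0
  | succ n ih =>
    have hn := congrArg (PowerSeries.coeff n) hf
    simp only [totalDerivation_apply, Dx, Dy, map_add, PowerSeries.coeff_mk, ih,
      zero_add, map_zero] at hn
    simpa [Nat.cast_add_one_ne_zero] using hn

lemma eq_of_totalDerivation_eq_zero [CharZero k] {f g : PowerSeries k[X]}
    (hf : totalDerivation f = 0) (hg : totalDerivation g = 0)
    (h0 : PowerSeries.constantCoeff f = PowerSeries.constantCoeff g) : f = g :=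
  sub_eq_zero.1 <| eq_zero_of_totalDerivation_eq_zero (by rw [map_sub, hf, hg, sub_zero])
    (by rw [map_sub, h0, sub_self])

lemma constantCoeff_aeval_X_sub_C_X (g : k[X]) :
    PowerSeries.constantCoeff (aeval (PowerSeries.X - PowerSeries.C (R := k[X]) X) g) =
      aeval (-X) g := by
  rw [map_aeval_eq_aeval_map (φ := RingHom.id k) (by ext; simp [PowerSeries.algebraMap_apply]),
    map_id]
  simp

end

/-- **Kernel of the total differential on `k[x][[y]]`.** Let `k` be a field of characteristic
zero and `f ∈ k[x][[y]]` with `∂f/∂x + ∂f/∂y = 0`. Then there is a unique polynomial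
`g ∈ k[t]` with `f = g(y − x)`; moreover any such `g` satisfies `g(−x) = f(x, 0)` (the
constant coefficient of `f`), which determines it. -/
theorem stmt_16 {k : Type*} [Field k] [CharZero k]
    (f : PowerSeries (Polynomial k)) (hf : Dx f + Dy f = 0) :
    (∃! g : Polynomial k,
        Polynomial.aeval
          (PowerSeries.X - PowerSeries.C (R := Polynomial k) Polynomial.X) g = f) ∧
    (∀ g : Polynomial k,
        Polynomial.aeval
          (PowerSeries.X - PowerSeries.C (R := Polynomial k) Polynomial.X) g = f →
        Polynomial.aeval (-(Polynomial.X : Polynomial k)) g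
          = PowerSeries.constantCoeff (R := Polynomial k) f) := by
  have hDf : totalDerivation f = 0 := by rwa [totalDerivation_apply]
  have h_const (g : k[X]) (hg : aeval (PowerSeries.X - PowerSeries.C X) g = f) :
      aeval (-X) g = PowerSeries.constantCoeff f :=
    hg ▸ (constantCoeff_aeval_X_sub_C_X g).symm
  refine ⟨⟨algEquivAevalNegX.symm (PowerSeries.constantCoeff f), ?_, fun g hg => ?_⟩, h_const⟩
  · refine eq_of_totalDerivation_eq_zero (totalDerivation_aeval_X_sub_C_X _) hDf ?_
    rw [constantCoeff_aeval_X_sub_C_X, ← algEquivAevalNegX_apply, AlgEquiv.apply_symm_apply]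
  · rw [AlgEquiv.eq_symm_apply, algEquivAevalNegX_apply, h_const g hg]
end
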